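/- Let g : [1,∞) → (0,∞) be almost increasing. Then sup_{x,y∈(0,1)} [g(1/(1−y))/g(1/(1−x))]·[(1−y²)(1−x²)/(1−xy)²] ≍ sup_{t,x∈(0,1]} [t·g(1/(tx))]/g(1/x), with implicit constants depending only on g. Moreover, if x ↦ x·g(1/x) is almost increasing on (0,1], then these quantities are finite. -/

import Mathlib

open MeasureTheory Filter Set

noncomputable section

/-- The open unit disk in `ℂ`. -/
def unitD : Set ℂ := {z : ℂ | ‖z‖ < 1}

/-- Analytic (holomorphic) on the open unit disk. -/
def AnalyticOnD (f : ℂ → ℂ) : Prop := DifferentiableOn ℂ f unitD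

/-- The `p`-th power integral mean of `f` over the circle of radius `r`
(with respect to normalized Lebesgue measure). -/
def circMean (p : ℝ) (f : ℂ → ℂ) (r : ℝ) : ℝ :=
  (∫ θ in (0:ℝ)..(2 * Real.pi), ‖f ((r : ℂ) * Complex.exp ((θ : ℂ) * Complex.I))‖ ^ p) /
    (2 * Real.pi)

/-- The Hardy space `H^p` norm. -/
def Hnorm (p : ℝ) (f : ℂ → ℂ) : ℝ :=
  (sSup ((circMean p f) '' (Ico (0:ℝ) 1))) ^ (1 / p)

/-- Membership in the Hardy space `H^p`. -/
def memHp (p : ℝ) (f : ℂ → ℂ) : Prop :=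
  AnalyticOnD f ∧ BddAbove ((circMean p f) '' (Ico (0:ℝ) 1))

/-- The Möbius transform `σ_a(z) = (a - z)/(1 - conj a * z)`. -/
def sigmaM (a z : ℂ) : ℂ := (a - z) / (1 - (starRingEnd ℂ) a * z)

/-- `γ(f, a, p) = ‖f ∘ σ_a - f a‖_{H^p}`. -/
def gammaF (f : ℂ → ℂ) (a : ℂ) (p : ℝ) : ℝ :=
  Hnorm p (fun z => f (sigmaM a z) - f a)

/-- The seminorm `‖f‖_{*,v,p} = sup_{a ∈ D} v a * γ(f,a,p)`. -/
def starNorm (v : ℂ → ℝ) (p : ℝ) (f : ℂ → ℂ) : ℝ :=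
  sSup {r : ℝ | ∃ a ∈ unitD, r = v a * gammaF f a p}

/-- Membership in `BMOA_{v,p}`. -/
def memBMOA (v : ℂ → ℝ) (p : ℝ) (f : ℂ → ℂ) : Prop :=
  memHp p f ∧ BddAbove {r : ℝ | ∃ a ∈ unitD, r = v a * gammaF f a p}

/-- The norm of `BMOA_{v,p}`:  `|f 0| + ‖f‖_{*,v,p}`. -/
def BMOAnorm (v : ℂ → ℝ) (p : ℝ) (f : ℂ → ℂ) : ℝ :=
  ‖f 0‖ + starNorm v p f

/-- Membership in `VMOA_{v,p}`:  `v a * γ(f,a,p) → 0` as `|a| → 1`. -/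
def memVMOA (v : ℂ → ℝ) (p : ℝ) (f : ℂ → ℂ) : Prop :=
  memBMOA v p f ∧
    ∀ ε > (0:ℝ), ∃ r ∈ Ico (0:ℝ) 1, ∀ a ∈ unitD, r < ‖a‖ → v a * gammaF f a p < ε

/-- A weight: a positive function, integrable on the unit disk. -/
def IsWeight (v : ℂ → ℝ) : Prop :=
  (∀ z ∈ unitD, 0 < v z) ∧ IntegrableOn v unitD

/-- `F` is almost increasing on the set `s`. -/
def AlmostIncreasingOn (F : ℝ → ℝ) (s : Set ℝ) : Prop :=
  ∃ C : ℝ, 1 ≤ C ∧ ∀ x ∈ s, ∀ y ∈ s, y ≤ x → F y ≤ C * F x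

/-- The value of `g` at a real point, as a real number. -/
def gre (g : ℂ → ℂ) (x : ℝ) : ℝ := (g (x : ℂ)).re

/-- `v` is an admissible weight, witnessed by `g`. -/
structure Admissible (v : ℂ → ℝ) (g : ℂ → ℂ) : Prop where
  weight : IsWeight v
  g_analytic : DifferentiableOn ℂ g {z : ℂ | (1:ℝ)/2 ≤ z.re}
  g_real : ∀ x : ℝ, (1:ℝ)/2 ≤ x → (g (x : ℂ)).im = 0
  g_pos : ∀ x : ℝ, (1:ℝ)/2 ≤ x → 0 < gre g x
  g_almostInc : AlmostIncreasingOn (gre g) (Ici ((1:ℝ)/2))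
  v_equiv : ∃ c₁ > (0:ℝ), ∃ c₂ > (0:ℝ), ∀ z ∈ unitD,
      c₁ * gre g (1 / (1 - ‖z‖)) ≤ v z ∧ v z ≤ c₂ * gre g (1 / (1 - ‖z‖))
  A1 : ∃ ε₀ > (0:ℝ), ∃ M : ℝ, ∀ x : ℝ, 0 < x → x < 1 → x * gre g (1 / x) ^ (2 + ε₀) ≤ M
  A2 : ∃ C > (0:ℝ), ∀ a b : ℝ, 0 < b → b ≤ a → a < 2 →
      gre g (1 / b) ≤ C * gre g (a / b) * gre g (1 / a)
  A3 : ∃ c > (0:ℝ), ∀ z : ℂ, (1:ℝ)/2 ≤ z.re → c * gre g ‖z‖ ≤ ‖g z‖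

/-- `h(x) = ∫₀ˣ dt / ((1−t) g(1/(1−t)))` (real version). -/
def hFun (g : ℂ → ℂ) (x : ℝ) : ℝ :=
  ∫ t in (0:ℝ)..x, 1 / ((1 - t) * gre g (1 / (1 - t)))

/-- `∫₀ˣ dt / ((1−t) v(t))`. -/
def hFunV (v : ℂ → ℝ) (x : ℝ) : ℝ :=
  ∫ t in (0:ℝ)..x, 1 / ((1 - t) * v ((t : ℝ) : ℂ))

/-- The complex version of `h`, integrated along the segment `[0, w]`. -/
def hC (g : ℂ → ℂ) (w : ℂ) : ℂ :=
  ∫ s in (0:ℝ)..1, w / ((1 - (s : ℂ) * w) * g (1 / (1 - (s : ℂ) * w)))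

/-- The weighted composition operator `W_{ψ,φ} f = ψ · (f ∘ φ)`. -/
def Wop (ψ φ : ℂ → ℂ) (f : ℂ → ℂ) : ℂ → ℂ := fun z => ψ z * f (φ z)

/-- The composition operator `C_φ f = f ∘ φ`. -/
def Cop (φ : ℂ → ℂ) (f : ℂ → ℂ) : ℂ → ℂ := fun z => f (φ z)

/-- `T` is a bounded operator on the space described by membership `mem` and norm `N`. -/
def BoundedOpOn (mem : (ℂ → ℂ) → Prop) (N : (ℂ → ℂ) → ℝ) (T : (ℂ → ℂ) → ℂ → ℂ) : Prop :=
  (∀ f, mem f → mem (T f)) ∧ ∃ C : ℝ, 0 ≤ C ∧ ∀ f, mem f → N (T f) ≤ C * N f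

/-- The operator norm of `T` on `(mem, N)`. -/
def opNormOn (mem : (ℂ → ℂ) → Prop) (N : (ℂ → ℂ) → ℝ) (T : (ℂ → ℂ) → ℂ → ℂ) : ℝ :=
  sInf {C : ℝ | 0 ≤ C ∧ ∀ f, mem f → N (T f) ≤ C * N f}

/-- `T` is a compact operator on `(mem, N)`: it is bounded and the image of every bounded
sequence of the space has a subsequence converging in the norm `N`. -/
def CompactOpOn (mem : (ℂ → ℂ) → Prop) (N : (ℂ → ℂ) → ℝ) (T : (ℂ → ℂ) → ℂ → ℂ) : Prop :=
  BoundedOpOn mem N T ∧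
    ∀ f : ℕ → ℂ → ℂ, (∀ n, mem (f n)) → (∃ M : ℝ, ∀ n, N (f n) ≤ M) →
      ∃ h : ℂ → ℂ, ∃ k : ℕ → ℕ, StrictMono k ∧
        Tendsto (fun n => N (fun z => T (f (k n)) z - h z)) atTop (nhds 0)

/-- The essential norm of `T` on `(mem, N)`. -/
def essNormOn (mem : (ℂ → ℂ) → Prop) (N : (ℂ → ℂ) → ℝ) (T : (ℂ → ℂ) → ℂ → ℂ) : ℝ :=
  sInf {r : ℝ | ∃ K, CompactOpOn mem N K ∧ r = opNormOn mem N (fun f z => T f z - K f z)}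

/-- `φ_a := σ_{φ a} ∘ φ ∘ σ_a`. -/
def phiA (φ : ℂ → ℂ) (a : ℂ) : ℂ → ℂ := fun z => sigmaM (φ a) (φ (sigmaM a z))

/-- `α(ψ, φ, a)`. -/
def alphaF (v : ℂ → ℝ) (ψ φ : ℂ → ℂ) (a : ℂ) : ℝ :=
  v a / v (φ a) * ‖ψ a‖ * Hnorm 2 (phiA φ a)

/-- The dual norm of the evaluation functional at `z`, on the space `(mem, N)`. -/
def evalDualNormOn (mem : (ℂ → ℂ) → Prop) (N : (ℂ → ℂ) → ℝ) (z : ℂ) : ℝ :=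
  sSup {r : ℝ | ∃ f, mem f ∧ N f ≤ 1 ∧ r = ‖f z‖}

/-- `‖δ_z‖_{(BMOA_v)^*}`. -/
def evalDualNorm (v : ℂ → ℝ) (z : ℂ) : ℝ :=
  evalDualNormOn (memBMOA v 2) (BMOAnorm v 2) z

/-- `β(ψ, φ, a)`. -/
def betaF (v : ℂ → ℝ) (ψ φ : ℂ → ℂ) (a : ℂ) : ℝ :=
  evalDualNorm v (φ a) * (v a * gammaF ψ a 1)

/-- Picks `BMOA_v` (`b = true`) or `VMOA_v` (`b = false`). -/
def spaceMem (b : Bool) (v : ℂ → ℝ) : (ℂ → ℂ) → Prop :=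
  fun f => if b then memBMOA v 2 f else memVMOA v 2 f

/-- `limsup_{s(a) → 1, a ∈ D} F(a)`, defined as an infimum of eventual upper bounds. -/
def limsupBdry (s : ℂ → ℝ) (F : ℂ → ℝ) : ℝ :=
  sInf {c : ℝ | ∃ r : ℝ, r < 1 ∧ ∀ a ∈ unitD, r < s a → F a ≤ c}

/-- The test function `f_a^{(2)}` associated with `α`. -/
def fAlpha (v : ℂ → ℝ) (φ : ℂ → ℂ) (a : ℂ) : ℂ → ℂ :=
  fun z => (sigmaM (φ a) z - φ a) / ((v (φ a) : ℝ) : ℂ)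

/-- The normalized test function `g_a^{(2)}` associated with `α`. -/
def gAlpha (v : ℂ → ℝ) (φ : ℂ → ℂ) (a : ℂ) : ℂ → ℂ :=
  fun z => fAlpha v φ a z / ((BMOAnorm v 2 (fAlpha v φ a) : ℝ) : ℂ)

/-- The test function `f_a^{(1)}` associated with `β`. -/
def fBeta (g : ℂ → ℂ) (φ : ℂ → ℂ) (a : ℂ) : ℂ → ℂ :=
  fun z => hC g (z * (starRingEnd ℂ) (φ a))

/-- The normalized test function `g_a^{(1)}` associated with `β`. -/
def gBeta (v : ℂ → ℝ) (g : ℂ → ℂ) (φ : ℂ → ℂ) (a : ℂ) : ℂ → ℂ :=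
  fun z => (1 + fBeta g φ a z) ^ 2 /
    ((BMOAnorm v 2 (fun w => (1 + fBeta g φ a w) ^ 2) : ℝ) : ℂ)

/-- The radial boundary value of `f` at a point `w` of the unit circle. -/
def bdryVal (f : ℂ → ℂ) (w : ℂ) : ℂ :=
  limUnder (nhdsWithin (1:ℝ) (Iio 1)) (fun r : ℝ => f ((r : ℂ) * w))

/-- The point `e^{it}` of the unit circle. -/
def arcPt (t : ℝ) : ℂ := Complex.exp ((t : ℂ) * Complex.I)

/-- The mean of a function `F` defined on the unit circle over the arc with center `e^{iθ}`
and normalized length `ℓ`. -/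
def arcMeanT (F : ℂ → ℂ) (θ ℓ : ℝ) : ℂ :=
  (∫ t in (θ - Real.pi * ℓ)..(θ + Real.pi * ℓ), F (arcPt t)) / ((2 * Real.pi * ℓ : ℝ) : ℂ)

/-- `η(F, I, p)` for a function `F` on the circle, for the arc `I` with center `e^{iθ}`
and normalized length `ℓ`. -/
def etaT (F : ℂ → ℂ) (θ ℓ : ℝ) (p : ℝ) : ℝ :=
  ((∫ t in (θ - Real.pi * ℓ)..(θ + Real.pi * ℓ), ‖F (arcPt t) - arcMeanT F θ ℓ‖ ^ p) /
    (2 * Real.pi * ℓ)) ^ (1 / p)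

/-- `η(f, I, p)` for `f` analytic on the disk, using radial boundary values. -/
def etaH (f : ℂ → ℂ) (θ ℓ : ℝ) (p : ℝ) : ℝ := etaT (bdryVal f) θ ℓ p

/-- The seminorm `‖f‖_{*,BMO_{v,p}}`. -/
def BMOstarNorm (v : ℂ → ℝ) (p : ℝ) (f : ℂ → ℂ) : ℝ :=
  sSup {r : ℝ | ∃ θ : ℝ, ∃ ℓ ∈ Ioc (0:ℝ) 1, r = v (((1 - ℓ : ℝ)) : ℂ) * etaH f θ ℓ p}

/-- Membership in `BMO_{v,p}`. -/
def memBMO (v : ℂ → ℝ) (p : ℝ) (f : ℂ → ℂ) : Prop :=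
  memHp p f ∧
    BddAbove {r : ℝ | ∃ θ : ℝ, ∃ ℓ ∈ Ioc (0:ℝ) 1, r = v (((1 - ℓ : ℝ)) : ℂ) * etaH f θ ℓ p}

/-- Membership in `VMO_{v,p}`. -/
def memVMO (v : ℂ → ℝ) (p : ℝ) (f : ℂ → ℂ) : Prop :=
  memBMO v p f ∧ ∀ ε > (0:ℝ), ∃ δ > (0:ℝ), ∀ θ ℓ : ℝ, ℓ ∈ Ioc (0:ℝ) 1 → ℓ < δ →
    v (((1 - ℓ : ℝ)) : ℂ) * etaH f θ ℓ p < ε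

end

/-!
With `A(x, y)` the first quotient and `B(t, x)` the second,
`A(1 - x, 1 - t x) = B(t, x) / t · K(1 - x, 1 - t x)` for `K(x, y) = (1 - y²)(1 - x²)/(1 - x y)²`,
and `t / 4 ≤ K(x, y) ≤ 4 t` with `t = (1 - y)/(1 - x)` whenever `0 ≤ x ≤ y < 1`; so the two
quotients dominate each other. When `y ≤ x` instead, `K ≤ 1` and almost monotonicity of `g` bound
`A(x, y)` directly, and the corner `x = 1`, which the substitution misses, is moved to `x = 1/2` by
almost monotonicity again. If `x ↦ x g(1/x)` is almost increasing, then
`B(t, x) = t x g(1/(t x)) / (x g(1/x))` is bounded outright.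
-/

/-- `1 - ρ(x, y)²` for the pseudo-hyperbolic distance `ρ(x, y) = |x - y| / (1 - x y)`. -/
noncomputable def oneSubPseudoDistSq (x y : ℝ) : ℝ := (1 - y ^ 2) * (1 - x ^ 2) / (1 - x * y) ^ 2

noncomputable def pseudoQuot (g : ℝ → ℝ) (x y : ℝ) : ℝ :=
  g (1 / (1 - y)) / g (1 / (1 - x)) * oneSubPseudoDistSq x y

noncomputable def dilationQuot (g : ℝ → ℝ) (t x : ℝ) : ℝ := t * g (1 / (t * x)) / g (1 / x)

section Kernel

variable {x y : ℝ}

theorem oneSubPseudoDistSq_le_one (x y : ℝ) : oneSubPseudoDistSq x y ≤ 1 :=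
  div_le_one_of_le₀ (by nlinarith [sq_nonneg (x - y)]) (sq_nonneg _)

theorem oneSubPseudoDistSq_self (hx : x ^ 2 ≠ 1) : oneSubPseudoDistSq x x = 1 := by
  rw [oneSubPseudoDistSq, ← sq, ← sq, div_self]
  exact pow_ne_zero 2 (sub_ne_zero.mpr (Ne.symm hx))

theorem oneSubPseudoDistSq_le (hx0 : 0 ≤ x) (hx1 : x < 1) (hy1 : y ≤ 1) :
    oneSubPseudoDistSq x y ≤ 4 * ((1 - y) / (1 - x)) := by
  have hx : 0 < 1 - x := sub_pos.mpr hx1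
  have hxy : 1 - x ≤ 1 - x * y := by nlinarith
  rw [oneSubPseudoDistSq, div_le_iff₀ (pow_pos (hx.trans_le hxy) 2)]
  calc (1 - y ^ 2) * (1 - x ^ 2) = (1 - y) * (1 - x) * ((1 + y) * (1 + x)) := by ring
    _ ≤ (1 - y) * (1 - x) * 4 := by gcongr; nlinarith
    _ = 4 * ((1 - y) / (1 - x)) * (1 - x) ^ 2 := by field_simp
    _ ≤ 4 * ((1 - y) / (1 - x)) * (1 - x * y) ^ 2 := by gcongr

theorem div_four_le_oneSubPseudoDistSq (hx0 : 0 ≤ x) (hxy : x ≤ y) (hy1 : y < 1) :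
    (1 - y) / (1 - x) / 4 ≤ oneSubPseudoDistSq x y := by
  have hx : 0 < 1 - x := by linarith
  have hxy1 : 1 - x * y ≤ 2 * (1 - x) := by nlinarith
  calc (1 - y) / (1 - x) / 4 = (1 - y) * (1 - x) / (2 * (1 - x)) ^ 2 := by field_simp; ring
    _ ≤ oneSubPseudoDistSq x y :=
      div_le_div₀ (mul_nonneg (by nlinarith) (by nlinarith))
        (mul_le_mul (by nlinarith) (by nlinarith) hx.le (by nlinarith))
        (pow_pos (by nlinarith) 2) (pow_le_pow_left₀ (by nlinarith) hxy1 2)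

end Kernel

section Quotients

variable {g : ℝ → ℝ} {C M t x y : ℝ}

theorem pseudoQuot_self (hg : ∀ x, 1 ≤ x → 0 < g x) (hx : x ∈ Ioo 0 1) :
    pseudoQuot g x x = 1 := by
  have hx2 : x ^ 2 ≠ 1 := by nlinarith [hx.1, hx.2]
  rw [pseudoQuot, oneSubPseudoDistSq_self hx2, mul_one,
    div_self (hg _ (one_le_one_div (by linarith [hx.2]) (by linarith [hx.1]))).ne']

theorem dilationQuot_one_one (hg1 : g 1 ≠ 0) : dilationQuot g 1 1 = 1 := by
  simp [dilationQuot, hg1]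

theorem pseudoQuot_le_const_of_le (hg : ∀ x, 1 ≤ x → 0 < g x)
    (hC : ∀ a ∈ Ici 1, ∀ b ∈ Ici 1, b ≤ a → g b ≤ C * g a)
    (hy0 : 0 ≤ y) (hyx : y ≤ x) (hx1 : x < 1) : pseudoQuot g x y ≤ C := by
  have hgx : 1 ≤ 1 / (1 - x) := one_le_one_div (by linarith) (by linarith)
  have hgy : 1 ≤ 1 / (1 - y) := one_le_one_div (by linarith) (by linarith)
  have hq : g (1 / (1 - y)) / g (1 / (1 - x)) ≤ C :=
    (div_le_iff₀ (hg _ hgx)).mpr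
      (hC _ hgx _ hgy (one_div_le_one_div_of_le (by linarith) (by linarith)))
  calc pseudoQuot g x y ≤ g (1 / (1 - y)) / g (1 / (1 - x)) * 1 :=
        mul_le_mul_of_nonneg_left (oneSubPseudoDistSq_le_one x y)
          (div_nonneg (hg _ hgy).le (hg _ hgx).le)
    _ ≤ C := by rwa [mul_one]

theorem pseudoQuot_le_four_mul_dilationQuot (hg : ∀ x, 1 ≤ x → 0 < g x)
    (hx : x ∈ Ico 0 1) (hy : y ∈ Ico 0 1) :
    pseudoQuot g x y ≤ 4 * dilationQuot g ((1 - y) / (1 - x)) (1 - x) := by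
  have hx1 : 1 - x ≠ 0 := by linarith [hx.2]
  have hq : 0 ≤ g (1 / (1 - y)) / g (1 / (1 - x)) :=
    div_nonneg (hg _ (one_le_one_div (by linarith [hy.2]) (by linarith [hy.1]))).le
      (hg _ (one_le_one_div (by linarith [hx.2]) (by linarith [hx.1]))).le
  rw [dilationQuot, div_mul_cancel₀ _ hx1]
  calc pseudoQuot g x y
      ≤ g (1 / (1 - y)) / g (1 / (1 - x)) * (4 * ((1 - y) / (1 - x))) :=
        mul_le_mul_of_nonneg_left (oneSubPseudoDistSq_le hx.1 hx.2 hy.2.le) hq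
    _ = _ := by ring

theorem dilationQuot_le_four_mul_pseudoQuot (hg : ∀ x, 1 ≤ x → 0 < g x)
    (ht : t ∈ Ioc 0 1) (hx : x ∈ Ioo 0 1) :
    dilationQuot g t x ≤ 4 * pseudoQuot g (1 - x) (1 - t * x) := by
  have htx : t * x ≤ x := mul_le_of_le_one_left hx.1.le ht.2
  have htx0 : 0 < t * x := mul_pos ht.1 hx.1
  have hK := div_four_le_oneSubPseudoDistSq (x := 1 - x) (y := 1 - t * x)
    (by linarith [hx.2]) (by linarith) (by linarith)
  rw [sub_sub_cancel, sub_sub_cancel, mul_div_cancel_right₀ _ hx.1.ne'] at hK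
  have hq : 0 ≤ g (1 / (t * x)) / g (1 / x) :=
    div_nonneg (hg _ (one_le_one_div htx0 (by linarith [hx.2]))).le
      (hg _ (one_le_one_div hx.1 hx.2.le)).le
  rw [pseudoQuot, sub_sub_cancel, sub_sub_cancel]
  calc dilationQuot g t x = 4 * (g (1 / (t * x)) / g (1 / x) * (t / 4)) := by
        rw [dilationQuot]; ring
    _ ≤ _ := by gcongr

theorem one_le_mul_div_of_almostIncreasing (hg : ∀ x, 1 ≤ x → 0 < g x)
    (hC : ∀ a ∈ Ici 1, ∀ b ∈ Ici 1, b ≤ a → g b ≤ C * g a) : 1 ≤ C * (g 2 / g 1) := by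
  rw [← mul_div_assoc, one_le_div (hg 1 le_rfl)]
  exact hC 2 (by norm_num) 1 self_mem_Ici (by norm_num)

theorem dilationQuot_one_le_mul_dilationQuot_half (hg : ∀ x, 1 ≤ x → 0 < g x)
    (hC : ∀ a ∈ Ici 1, ∀ b ∈ Ici 1, b ≤ a → g b ≤ C * g a) (ht : t ∈ Ioc 0 1) :
    dilationQuot g t 1 ≤ C * (g 2 / g 1) * dilationQuot g t (1 / 2) := by
  have h2t : 1 / (t * (1 / 2)) = 2 / t := by field_simp
  have hgt : g (1 / t) ≤ C * g (2 / t) :=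
    hC _ (by rw [mem_Ici, le_div_iff₀ ht.1]; linarith [ht.2]) _ (one_le_one_div ht.1 ht.2)
      (div_le_div_of_nonneg_right (by norm_num) ht.1.le)
  rw [dilationQuot, dilationQuot, mul_one, one_div_one, h2t, one_div_one_div,
    div_le_iff₀ (hg 1 le_rfl)]
  calc t * g (1 / t) ≤ t * (C * g (2 / t)) := mul_le_mul_of_nonneg_left hgt ht.1.le
    _ = C * (g 2 / g 1) * (t * g (2 / t) / g 2) * g 1 := by
        field_simp [(hg 1 le_rfl).ne', (hg 2 (by norm_num)).ne']

theorem dilationQuot_le_of_pseudoQuot_le (hg : ∀ x, 1 ≤ x → 0 < g x)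
    (hC : ∀ a ∈ Ici 1, ∀ b ∈ Ici 1, b ≤ a → g b ≤ C * g a)
    (hM : ∀ x ∈ Ioo (0 : ℝ) 1, ∀ y ∈ Ioo (0 : ℝ) 1, pseudoQuot g x y ≤ M)
    (ht : t ∈ Ioc 0 1) (hx : x ∈ Ioc 0 1) :
    dilationQuot g t x ≤ 4 * (C * (g 2 / g 1)) * M := by
  have hC' := one_le_mul_div_of_almostIncreasing hg hC
  have hM1 : 1 ≤ M :=
    pseudoQuot_self hg (x := 1 / 2) (by norm_num) ▸ hM _ (by norm_num) _ (by norm_num)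
  have hinterior : ∀ x ∈ Ioo (0 : ℝ) 1, dilationQuot g t x ≤ 4 * M := fun x hx =>
    (dilationQuot_le_four_mul_pseudoQuot hg ht hx).trans <| by
      gcongr
      refine hM _ ⟨by linarith [hx.2], by linarith [hx.1]⟩ _ ⟨?_, ?_⟩ <;>
        nlinarith [ht.1, ht.2, hx.1, hx.2]
  rcases hx.2.lt_or_eq with hx1 | rfl
  · calc dilationQuot g t x ≤ 4 * M := hinterior x ⟨hx.1, hx1⟩
      _ ≤ 4 * (C * (g 2 / g 1)) * M := by nlinarith
  · calc dilationQuot g t 1 ≤ C * (g 2 / g 1) * dilationQuot g t (1 / 2) :=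
          dilationQuot_one_le_mul_dilationQuot_half hg hC ht
      _ ≤ C * (g 2 / g 1) * (4 * M) := by
          gcongr
          exact hinterior _ (by norm_num)
      _ = 4 * (C * (g 2 / g 1)) * M := by ring

theorem pseudoQuot_le_of_dilationQuot_le (hg : ∀ x, 1 ≤ x → 0 < g x) (hC1 : 1 ≤ C)
    (hC : ∀ a ∈ Ici 1, ∀ b ∈ Ici 1, b ≤ a → g b ≤ C * g a)
    (hM : ∀ t ∈ Ioc (0 : ℝ) 1, ∀ x ∈ Ioc (0 : ℝ) 1, dilationQuot g t x ≤ M)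
    (hx : x ∈ Ioo 0 1) (hy : y ∈ Ioo 0 1) : pseudoQuot g x y ≤ 4 * C * M := by
  have hM1 : 1 ≤ M :=
    dilationQuot_one_one (hg 1 le_rfl).ne' ▸ hM 1 ⟨one_pos, le_rfl⟩ 1 ⟨one_pos, le_rfl⟩
  rcases le_or_gt y x with hyx | hxy
  · calc pseudoQuot g x y ≤ C := pseudoQuot_le_const_of_le hg hC hy.1.le hyx hx.2
      _ ≤ 4 * C * M := by nlinarith
  · have hx1 : 0 < 1 - x := by linarith [hx.2]
    calc pseudoQuot g x y ≤ 4 * dilationQuot g ((1 - y) / (1 - x)) (1 - x) :=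
          pseudoQuot_le_four_mul_dilationQuot hg ⟨hx.1.le, hx.2⟩ ⟨hy.1.le, hy.2⟩
      _ ≤ 4 * M := by
          gcongr
          refine hM _ ⟨div_pos (by linarith [hy.2]) hx1, (div_le_one hx1).mpr (by linarith)⟩ _
            ⟨hx1, by linarith [hx.1]⟩
      _ ≤ 4 * C * M := by nlinarith

theorem dilationQuot_le_of_almostIncreasing (hg : ∀ x, 1 ≤ x → 0 < g x)
    (hC : ∀ a ∈ Ioc (0 : ℝ) 1, ∀ b ∈ Ioc (0 : ℝ) 1, b ≤ a → b * g (1 / b) ≤ C * (a * g (1 / a)))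
    (ht : t ∈ Ioc 0 1) (hx : x ∈ Ioc 0 1) : dilationQuot g t x ≤ C := by
  have htx : t * x ∈ Ioc (0 : ℝ) 1 := ⟨mul_pos ht.1 hx.1, mul_le_one₀ ht.2 hx.1.le hx.2⟩
  rw [dilationQuot, div_le_iff₀ (hg _ (one_le_one_div hx.1 hx.2)), ← mul_le_mul_iff_right₀ hx.1]
  calc x * (t * g (1 / (t * x))) = t * x * g (1 / (t * x)) := by ring
    _ ≤ C * (x * g (1 / x)) := hC x hx _ htx (mul_le_of_le_one_left hx.1.le ht.2)
    _ = x * (C * g (1 / x)) := by ring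

end Quotients

/-- Lemma: equivalence of two suprema.
For an almost increasing `g : [1,∞) → (0,∞)`,
`sup_{x,y∈(0,1)} [g(1/(1−y))/g(1/(1−x))]·[(1−y²)(1−x²)/(1−xy)²]
  ≍ sup_{t,x∈(0,1]} t g(1/(tx))/g(1/x)`  (formulated via mutual domination of upper
bounds), and if `x ↦ x g(1/x)` is almost increasing on `(0,1]` then both quantities
are finite. -/
theorem stmt18 (g : ℝ → ℝ) (hgpos : ∀ x : ℝ, 1 ≤ x → 0 < g x)
    (hgai : AlmostIncreasingOn g (Ici 1)) :
    (∃ c₁ > (0:ℝ), ∀ M : ℝ,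
      (∀ x ∈ Ioo (0:ℝ) 1, ∀ y ∈ Ioo (0:ℝ) 1,
        g (1/(1-y)) / g (1/(1-x)) * ((1-y^2) * (1-x^2) / (1-x*y)^2) ≤ M) →
      ∀ t ∈ Ioc (0:ℝ) 1, ∀ x ∈ Ioc (0:ℝ) 1, t * g (1/(t*x)) / g (1/x) ≤ c₁ * M) ∧
    (∃ c₂ > (0:ℝ), ∀ M : ℝ,
      (∀ t ∈ Ioc (0:ℝ) 1, ∀ x ∈ Ioc (0:ℝ) 1, t * g (1/(t*x)) / g (1/x) ≤ M) →
      ∀ x ∈ Ioo (0:ℝ) 1, ∀ y ∈ Ioo (0:ℝ) 1,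
        g (1/(1-y)) / g (1/(1-x)) * ((1-y^2) * (1-x^2) / (1-x*y)^2) ≤ c₂ * M) ∧
    (AlmostIncreasingOn (fun x => x * g (1/x)) (Ioc 0 1) →
      ∃ M : ℝ, (∀ t ∈ Ioc (0:ℝ) 1, ∀ x ∈ Ioc (0:ℝ) 1, t * g (1/(t*x)) / g (1/x) ≤ M) ∧
        (∀ x ∈ Ioo (0:ℝ) 1, ∀ y ∈ Ioo (0:ℝ) 1,
          g (1/(1-y)) / g (1/(1-x)) * ((1-y^2) * (1-x^2) / (1-x*y)^2) ≤ M)) := by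
  obtain ⟨C, hC1, hC⟩ := hgai
  have hC0 : 0 < C := one_pos.trans_le hC1
  have hg1 := hgpos 1 le_rfl
  have hg2 := hgpos 2 (by norm_num)
  refine ⟨⟨4 * (C * (g 2 / g 1)), by positivity, fun M hM t ht x hx => ?_⟩,
    ⟨4 * C, by positivity, fun M hM x hx y hy => ?_⟩, ?_⟩
  · exact dilationQuot_le_of_pseudoQuot_le hgpos hC hM ht hx
  · exact pseudoQuot_le_of_dilationQuot_le hgpos hC1 hC hM hx hy
  rintro ⟨C', hC'1, hC'⟩
  have hB : ∀ t ∈ Ioc (0 : ℝ) 1, ∀ x ∈ Ioc (0 : ℝ) 1, dilationQuot g t x ≤ C' :=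
    fun t ht x hx => dilationQuot_le_of_almostIncreasing hgpos hC' ht hx
  refine ⟨4 * C * C', fun t ht x hx => (hB t ht x hx).trans ?_,
    fun x hx y hy => pseudoQuot_le_of_dilationQuot_le hgpos hC1 hC hB hx hy⟩
  exact le_mul_of_one_le_left (by linarith) (by linarith)
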